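/- Let s, k be positive naturals and S a finite set with 1 ≤ |S| ≤ 2^s. Suppose i is the smallest index j in {1,…,sk+1} such that |S|^k < 2^j. Then 2^{i−2} < |S|^k < 2^i, and consequently |S| ≤ 2^{i/k} and 2^{i/k} < 4^{1/k}·|S| (as real numbers). -/

import Mathlib

theorem stmt_10 {α : Type*} (s k : ℕ) (hs : 0 < s) (hk : 0 < k)
    (S : Finset α) (hS1 : 1 ≤ S.card) (hS2 : S.card ≤ 2 ^ s)
    (i : ℕ) (hi1 : 1 ≤ i) (hi2 : i ≤ s * k + 1)
    (hlt : S.card ^ k < 2 ^ i)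
    (hmin : ∀ j, 1 ≤ j → j < i → ¬ S.card ^ k < 2 ^ j) :
    (2 : ℝ) ^ ((i : ℝ) - 2) < (S.card : ℝ) ^ k ∧
    ((S.card : ℝ) ^ k < 2 ^ i) ∧
    (S.card : ℝ) ≤ (2 : ℝ) ^ ((i : ℝ) / k) ∧
    (2 : ℝ) ^ ((i : ℝ) / k) < (4 : ℝ) ^ ((1 : ℝ) / k) * S.card := by
  have hn1 : (1:ℝ) ≤ (S.card : ℝ) := by exact_mod_cast hS1
  have hn0 : (0:ℝ) ≤ (S.card : ℝ) := by linarith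
  have hnk : (1:ℝ) ≤ (S.card : ℝ) ^ k := one_le_pow₀ hn1
  have hkR : (0:ℝ) < (k:ℝ) := by exact_mod_cast hk
  have h1 : (2 : ℝ) ^ ((i : ℝ) - 2) < (S.card : ℝ) ^ k := by
    rcases eq_or_lt_of_le hi1 with h | h
    · have hh : (i:ℝ) - 2 = -1 := by rw [← h]; norm_num
      rw [hh]
      calc (2:ℝ)^(-1:ℝ) < 1 := by
            rw [Real.rpow_neg_one]; norm_num
        _ ≤ _ := hnk
    · have h2 : 2 ≤ i := h
      have hm := hmin (i-1) (by omega) (by omega)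
      push_neg at hm
      have hle : ((2:ℝ))^((i:ℕ)-1) ≤ (S.card:ℝ)^k := by exact_mod_cast hm
      calc (2:ℝ)^((i:ℝ)-2) < 2^(((i:ℕ)-1 : ℕ) : ℝ) := by
            apply (Real.rpow_lt_rpow_left_iff (by norm_num)).2
            have : (((i:ℕ)-1 : ℕ) : ℝ) = (i:ℝ) - 1 := by
              push_cast [Nat.cast_sub hi1]; ring
            rw [this]; linarith
        _ = 2^((i:ℕ)-1) := by rw [Real.rpow_natCast]
        _ ≤ _ := hle
  have h2 : (S.card : ℝ) ^ k < 2 ^ i := by exact_mod_cast hlt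
  have hpow : ((2:ℝ) ^ ((i:ℝ)/k)) ^ k = 2 ^ (i:ℝ) := by
    rw [← Real.rpow_natCast ((2:ℝ) ^ ((i:ℝ)/k)) k, ← Real.rpow_mul (by norm_num),
      div_mul_cancel₀ _ (ne_of_gt hkR)]
  have h2' : (S.card : ℝ) ^ k < 2 ^ (i:ℝ) := by
    rwa [Real.rpow_natCast]
  have h3 : (S.card : ℝ) ≤ (2 : ℝ) ^ ((i : ℝ) / k) := by
    by_contra hc
    push_neg at hc
    have := pow_lt_pow_left₀ (n := k) hc (Real.rpow_nonneg (by norm_num) _) hk.ne'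
    rw [hpow] at this
    linarith
  -- fourth part
  have h4' : (2:ℝ) ^ (((i:ℝ) - 2)/k) < (S.card : ℝ) := by
    by_contra hc
    push_neg at hc
    have := pow_le_pow_left₀ hn0 hc k
    have hpow2 : ((2:ℝ) ^ (((i:ℝ)-2)/k)) ^ k = 2 ^ ((i:ℝ)-2) := by
      rw [← Real.rpow_natCast ((2:ℝ) ^ (((i:ℝ)-2)/k)) k, ← Real.rpow_mul (by norm_num),
        div_mul_cancel₀ _ (ne_of_gt hkR)]
    rw [hpow2] at this
    linarith
  have h4 : (2 : ℝ) ^ ((i : ℝ) / k) < (4 : ℝ) ^ ((1 : ℝ) / k) * S.card := by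
    have h4eq : (4:ℝ) ^ ((1:ℝ)/k) = 2 ^ ((2:ℝ)/k) := by
      rw [show (4:ℝ) = 2^(2:ℝ) by norm_num, ← Real.rpow_mul (by norm_num)]
      ring_nf
    rw [h4eq]
    have : (2:ℝ) ^ ((i:ℝ)/k) = 2 ^ ((2:ℝ)/k) * 2 ^ (((i:ℝ)-2)/k) := by
      rw [← Real.rpow_add (by norm_num)]
      congr 1; field_simp; ring
    rw [this]
    have h2k : (0:ℝ) < 2 ^ ((2:ℝ)/k) := Real.rpow_pos_of_pos (by norm_num) _
    nlinarith
  exact ⟨h1, h2, h3, h4⟩
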